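/- The logarithmic coherence number is monotone under incoherent operations: let Λ be a completely positive trace-preserving map on d×d complex matrices admitting a Kraus representation Λ(ρ) = Σ_n K_n ρ K_n† in which every Kraus operator K_n is incoherent. Then for every density matrix ρ on ℂ^d, L_C(Λ(ρ)) ≤ L_C(ρ). -/

import Mathlib

open scoped BigOperators ComplexOrder Matrix

open Classical in
/-- Coherence rank: number of nonzero coordinates in the fixed basis. -/
noncomputable def cohRank {ι : Type*} [Fintype ι] (ψ : ι → ℂ) : ℕ :=
  (Finset.univ.filter fun i => ψ i ≠ 0).card

/-- Logarithmic coherence rank. -/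
noncomputable def logCohRank {ι : Type*} [Fintype ι] (ψ : ι → ℂ) : ℝ :=
  Real.logb 2 (cohRank ψ)

/-- A density matrix: positive semidefinite with trace one. -/
def IsDensity {ι : Type*} [Fintype ι] (ρ : Matrix ι ι ℂ) : Prop :=
  ρ.PosSemidef ∧ ρ.trace = 1

/-- A pure-state decomposition ρ = ∑ pᵢ |ψᵢ⟩⟨ψᵢ| with pᵢ > 0, ∑ pᵢ = 1 and ψᵢ unit vectors. -/
def IsDecomp {ι : Type*} [Fintype ι] (ρ : Matrix ι ι ℂ) {n : ℕ}
    (p : Fin n → ℝ) (ψ : Fin n → ι → ℂ) : Prop :=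
  (∀ i, 0 < p i) ∧ (∑ i, p i = 1) ∧ (∀ i, ∑ x, ‖ψ i x‖ ^ 2 = 1) ∧
    ρ = ∑ i, (p i : ℂ) • Matrix.vecMulVec (ψ i) (star (ψ i))

/-- Logarithmic coherence number via the convex roof construction. -/
noncomputable def logCohNum {ι : Type*} [Fintype ι] (ρ : Matrix ι ι ℂ) : ℝ :=
  sInf { x | ∃ (n : ℕ) (p : Fin n → ℝ) (ψ : Fin n → ι → ℂ),
    IsDecomp ρ p ψ ∧ x = ∑ i, p i * logCohRank (ψ i) }

/-- Logarithm of the Schmidt rank of a bipartite vector (rank of its coefficient matrix). -/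
noncomputable def logSchmidtRank {ι κ : Type*} [Fintype ι] [Fintype κ]
    (ψ : ι × κ → ℂ) : ℝ :=
  Real.logb 2 ((Matrix.of fun i j => ψ (i, j)).rank)

/-- Logarithmic Schmidt number via the convex roof construction. -/
noncomputable def logSchmidtNum {ι κ : Type*} [Fintype ι] [Fintype κ]
    (ρ : Matrix (ι × κ) (ι × κ) ℂ) : ℝ :=
  sInf { x | ∃ (n : ℕ) (p : Fin n → ℝ) (ψ : Fin n → ι × κ → ℂ),
    IsDecomp ρ p ψ ∧ x = ∑ i, p i * logSchmidtRank (ψ i) }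

/-- An incoherent Kraus operator maps diagonal matrices to diagonal matrices under δ ↦ KδK†. -/
def IsIncoherentKraus {ι : Type*} [Fintype ι] (K : Matrix ι ι ℂ) : Prop :=
  ∀ δ : Matrix ι ι ℂ, δ.IsDiag → (K * δ * Kᴴ).IsDiag

/-!
An incoherent Kraus operator has at most one nonzero entry in each column, so it cannot increase
the coherence rank of a vector. If `ρ = ∑ᵢ pᵢ |ψᵢ⟩⟨ψᵢ|`, then `Λ(ρ) = ∑ₙᵢ pᵢ |Kₙψᵢ⟩⟨Kₙψᵢ|`, and
normalising the vectors `Kₙψᵢ` gives a pure-state decomposition of `Λ(ρ)` with weights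
`pᵢ ‖Kₙψᵢ‖²`, which sum to `pᵢ` over `n` by trace preservation. Each of its vectors has logarithmic
coherence rank at most that of `ψᵢ`, so its average is at most `∑ᵢ pᵢ log₂ R_C(ψᵢ)`.
-/

open Matrix

section CoherenceRank

variable {ι : Type*} [Fintype ι]

theorem logCohRank_nonneg (v : ι → ℂ) : 0 ≤ logCohRank v :=
  div_nonneg (Real.log_natCast_nonneg _) (Real.log_nonneg one_le_two)

theorem logCohRank_le_of_cohRank_le {u v : ι → ℂ} (h : cohRank u ≤ cohRank v) :
    logCohRank u ≤ logCohRank v := by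
  rcases (cohRank u).eq_zero_or_pos with h0 | hpos
  · simp only [logCohRank, h0, Nat.cast_zero, Real.logb_zero]
    exact logCohRank_nonneg v
  · exact Real.logb_le_logb_of_le one_lt_two (by exact_mod_cast hpos) (by exact_mod_cast h)

theorem cohRank_smul {c : ℂ} (hc : c ≠ 0) (v : ι → ℂ) : cohRank (c • v) = cohRank v := by
  simp [cohRank, hc]

theorem logCohRank_smul {c : ℂ} (hc : c ≠ 0) (v : ι → ℂ) : logCohRank (c • v) = logCohRank v := by
  rw [logCohRank, cohRank_smul hc, logCohRank]

end CoherenceRank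

section Incoherent

variable {ι : Type*} [Fintype ι] [DecidableEq ι] {K : Matrix ι ι ℂ}

theorem IsIncoherentKraus.eq_zero_or_eq_zero (hK : IsIncoherentKraus K) (j : ι) {a b : ι}
    (hab : a ≠ b) : K a j = 0 ∨ K b j = 0 := by
  have hdiag : (K * diagonal (Pi.single j 1) * Kᴴ : Matrix ι ι ℂ) a b = 0 :=
    hK (diagonal (Pi.single j 1)) (isDiag_diagonal _) hab
  rw [mul_apply, Finset.sum_eq_single j (fun c _ hc => by simp [hc]) (by simp)] at hdiag
  simpa [mul_diagonal] using hdiag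

theorem IsIncoherentKraus.cohRank_mulVec_le (hK : IsIncoherentKraus K) (ψ : ι → ℂ) :
    cohRank (K *ᵥ ψ) ≤ cohRank ψ := by
  classical
  let supp : (ι → ℂ) → Finset ι := fun v => Finset.univ.filter fun i => v i ≠ 0
  let column : ι → Finset ι := fun j => Finset.univ.filter fun a => K a j ≠ 0
  have hsub : supp (K *ᵥ ψ) ⊆ (supp ψ).biUnion column := by
    intro a ha
    obtain ⟨j, -, hj⟩ := Finset.exists_ne_zero_of_sum_ne_zero (Finset.mem_filter.mp ha).2
    simp only [Finset.mem_biUnion, Finset.mem_filter, Finset.mem_univ, true_and, supp, column]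
    exact ⟨j, right_ne_zero_of_mul hj, left_ne_zero_of_mul hj⟩
  have hcolumn : ∀ j ∈ supp ψ, (column j).card ≤ 1 := fun j _ =>
    Finset.card_le_one.mpr fun a ha b hb => by
      by_contra hab
      simp only [Finset.mem_filter, column] at ha hb
      exact (hK.eq_zero_or_eq_zero j hab).elim ha.2 hb.2
  calc cohRank (K *ᵥ ψ) = (supp (K *ᵥ ψ)).card := by simp only [cohRank, supp]
    _ ≤ (supp ψ).card * 1 :=
      (Finset.card_le_card hsub).trans (Finset.card_biUnion_le_card_mul _ _ _ hcolumn)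
    _ = cohRank ψ := by simp only [cohRank, supp, mul_one]

theorem IsIncoherentKraus.logCohRank_mulVec_le (hK : IsIncoherentKraus K) (ψ : ι → ℂ) :
    logCohRank (K *ᵥ ψ) ≤ logCohRank ψ :=
  logCohRank_le_of_cohRank_le (hK.cohRank_mulVec_le ψ)

end Incoherent

section Vectors

variable {ι : Type*} [Fintype ι]

theorem ofReal_sum_norm_sq (v : ι → ℂ) : ((∑ x, ‖v x‖ ^ 2 : ℝ) : ℂ) = star v ⬝ᵥ v := by
  simp only [Complex.ofReal_sum, dotProduct, Pi.star_apply, Complex.star_def, Complex.conj_mul']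
  push_cast
  rfl

theorem sum_norm_sq_eq_zero_iff {v : ι → ℂ} : ∑ x, ‖v x‖ ^ 2 = 0 ↔ v = 0 := by
  simp [Finset.sum_eq_zero_iff_of_nonneg, funext_iff]

theorem sum_norm_sq_smul (c : ℂ) (v : ι → ℂ) :
    ∑ x, ‖(c • v) x‖ ^ 2 = ‖c‖ ^ 2 * ∑ x, ‖v x‖ ^ 2 := by
  simp only [Pi.smul_apply, smul_eq_mul, norm_mul, mul_pow, Finset.mul_sum]

omit [Fintype ι] in
theorem vecMulVec_smul_star_smul (c : ℂ) (v : ι → ℂ) :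
    vecMulVec (c • v) (star (c • v)) = ((‖c‖ ^ 2 : ℝ) : ℂ) • vecMulVec v (star v) := by
  ext a b
  simp only [vecMulVec_apply, Pi.smul_apply, Pi.star_apply, smul_eq_mul, star_mul',
    Complex.star_def, Matrix.smul_apply, Complex.ofReal_pow, ← Complex.mul_conj']
  ring

theorem mul_vecMulVec_star_mul_conjTranspose (K : Matrix ι ι ℂ) (v : ι → ℂ) :
    K * vecMulVec v (star v) * Kᴴ = vecMulVec (K *ᵥ v) (star (K *ᵥ v)) := by
  rw [mul_vecMulVec, vecMulVec_mul, star_mulVec]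

theorem sum_sum_norm_sq_mulVec [DecidableEq ι] {m : ℕ} {K : Fin m → Matrix ι ι ℂ}
    (htp : ∑ k, (K k)ᴴ * K k = 1) (v : ι → ℂ) :
    ∑ k, ∑ x, ‖(K k *ᵥ v) x‖ ^ 2 = ∑ x, ‖v x‖ ^ 2 := by
  apply Complex.ofReal_injective
  rw [Complex.ofReal_sum]
  simp only [ofReal_sum_norm_sq]
  calc ∑ k, star (K k *ᵥ v) ⬝ᵥ (K k *ᵥ v) = ∑ k, star v ⬝ᵥ ((K k)ᴴ * K k) *ᵥ v := by
        simp only [star_mulVec, dotProduct_mulVec, vecMul_vecMul]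
    _ = star v ⬝ᵥ v := by rw [← dotProduct_sum, ← sum_mulVec, htp, one_mulVec]

end Vectors

section Decomposition

variable {ι : Type*} [Fintype ι]

theorem IsDecomp.logCohNum_le {ρ : Matrix ι ι ℂ} {n : ℕ} {p : Fin n → ℝ} {ψ : Fin n → ι → ℂ}
    (h : IsDecomp ρ p ψ) : logCohNum ρ ≤ ∑ i, p i * logCohRank (ψ i) := by
  refine csInf_le ⟨0, ?_⟩ ⟨n, p, ψ, h, rfl⟩
  rintro _ ⟨n', p', ψ', h', rfl⟩
  exact Finset.sum_nonneg fun i _ => mul_nonneg (h'.1 i).le (logCohRank_nonneg _)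

theorem exists_isDecomp_of_fintype {κ : Type*} [Fintype κ] {p : κ → ℝ} {ψ : κ → ι → ℂ}
    (hp : ∀ k, 0 < p k) (hsum : ∑ k, p k = 1) (hψ : ∀ k, ∑ x, ‖ψ k x‖ ^ 2 = 1) :
    ∃ (n : ℕ) (p' : Fin n → ℝ) (ψ' : Fin n → ι → ℂ),
      IsDecomp (∑ k, (p k : ℂ) • vecMulVec (ψ k) (star (ψ k))) p' ψ' ∧
        ∑ i, p' i * logCohRank (ψ' i) = ∑ k, p k * logCohRank (ψ k) := by
  let e := (Fintype.equivFin κ).symm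
  exact ⟨_, p ∘ e, ψ ∘ e, ⟨fun _ => hp _, (e.sum_comp p).trans hsum, fun _ => hψ _,
    (e.sum_comp _).symm⟩, e.sum_comp fun k => p k * logCohRank (ψ k)⟩

theorem Fintype.sum_subtype_of_eq_zero {κ M : Type*} [Fintype κ] [AddCommMonoid M]
    (P : κ → Prop) [DecidablePred P] {f : κ → M} (hf : ∀ k, ¬P k → f k = 0) :
    ∑ k : {k // P k}, f k = ∑ k, f k := by
  rw [← Fintype.sum_subtype_add_sum_subtype P f,
    Fintype.sum_eq_zero (fun k : {k // ¬P k} => f k) fun k => hf k k.2, add_zero]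

theorem exists_isDecomp_of_sum_smul_vecMulVec {κ : Type*} [Fintype κ] {w : κ → ℝ}
    (hw : ∀ k, 0 ≤ w k) (v : κ → ι → ℂ) (hsum : ∑ k, w k * ∑ x, ‖v k x‖ ^ 2 = 1) :
    ∃ (n : ℕ) (p : Fin n → ℝ) (ψ : Fin n → ι → ℂ),
      IsDecomp (∑ k, (w k : ℂ) • vecMulVec (v k) (star (v k))) p ψ ∧
        ∑ i, p i * logCohRank (ψ i) = ∑ k, w k * (∑ x, ‖v k x‖ ^ 2) * logCohRank (v k) := by
  classical
  set N : κ → ℝ := fun k => ∑ x, ‖v k x‖ ^ 2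
  have hN : ∀ k, 0 ≤ N k := fun k => Finset.sum_nonneg fun x _ => sq_nonneg _
  let P : κ → Prop := fun k => w k * N k ≠ 0
  let c : κ → ℂ := fun k => ((Real.sqrt (N k))⁻¹ : ℝ)
  have hc : ∀ k, P k → c k ≠ 0 ∧ ‖c k‖ ^ 2 * N k = 1 := by
    intro k hk
    have hNk : N k ≠ 0 := right_ne_zero_of_mul hk
    refine ⟨by simpa [c, Real.sqrt_eq_zero (hN k)] using hNk, ?_⟩
    rw [Complex.norm_real, Real.norm_eq_abs, sq_abs, inv_pow, Real.sq_sqrt (hN k),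
      inv_mul_cancel₀ hNk]
  obtain ⟨n, p, ψ, hdec, hval⟩ := exists_isDecomp_of_fintype (κ := {k // P k})
    (p := fun k => w k * N k) (ψ := fun k => c k • v k)
    (fun k => lt_of_le_of_ne (mul_nonneg (hw k) (hN k)) (Ne.symm k.2))
    (by rwa [Fintype.sum_subtype_of_eq_zero P fun k hk => not_not.mp hk])
    (fun k => by rw [sum_norm_sq_smul, (hc k k.2).2])
  refine ⟨n, p, ψ, ?_, ?_⟩
  · convert hdec using 1
    rw [← Fintype.sum_subtype_of_eq_zero P]
    · refine Fintype.sum_congr _ _ fun k => ?_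
      rw [vecMulVec_smul_star_smul, smul_smul, ← Complex.ofReal_mul, mul_assoc, mul_comm (N k),
        (hc k k.2).2, mul_one]
    · intro k hk
      rcases mul_eq_zero.mp (not_not.mp hk) with h | h
      · simp [h]
      · simp [sum_norm_sq_eq_zero_iff.mp h]
  · rw [hval, ← Fintype.sum_subtype_of_eq_zero P fun k hk => by
      show w k * N k * _ = 0
      rw [not_not.mp hk, zero_mul]]
    exact Fintype.sum_congr _ _ fun k => by rw [logCohRank_smul (hc k k.2).1]

theorem logCohNum_sum_smul_vecMulVec_le {κ : Type*} [Fintype κ] {w : κ → ℝ}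
    (hw : ∀ k, 0 ≤ w k) (v : κ → ι → ℂ) (hsum : ∑ k, w k * ∑ x, ‖v k x‖ ^ 2 = 1) :
    logCohNum (∑ k, (w k : ℂ) • vecMulVec (v k) (star (v k))) ≤
      ∑ k, w k * (∑ x, ‖v k x‖ ^ 2) * logCohRank (v k) := by
  obtain ⟨n, p, ψ, hdec, hval⟩ := exists_isDecomp_of_sum_smul_vecMulVec hw v hsum
  exact hval ▸ hdec.logCohNum_le

theorem IsDensity.exists_isDecomp {ρ : Matrix ι ι ℂ} (hρ : IsDensity ρ) :
    ∃ (n : ℕ) (p : Fin n → ℝ) (ψ : Fin n → ι → ℂ), IsDecomp ρ p ψ := by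
  obtain ⟨m, v, rfl⟩ := posSemidef_iff_eq_sum_vecMulVec.mp hρ.1
  have hsum : ∑ k, (1 : ℝ) * ∑ x, ‖v k x‖ ^ 2 = 1 := by
    apply Complex.ofReal_injective
    rw [Complex.ofReal_one, ← hρ.2, trace_sum, Complex.ofReal_sum]
    exact Finset.sum_congr rfl fun k _ => by
      rw [one_mul, ofReal_sum_norm_sq, trace_vecMulVec, dotProduct_comm]
  obtain ⟨n, p, ψ, hdec, -⟩ := exists_isDecomp_of_sum_smul_vecMulVec (fun _ => zero_le_one) v hsum
  exact ⟨n, p, ψ, by simpa using hdec⟩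

end Decomposition

section KrausOperators

variable {ι : Type*} [Fintype ι] {ρ : Matrix ι ι ℂ} {n m : ℕ} {p : Fin n → ℝ}
  {ψ : Fin n → ι → ℂ}

theorem IsDecomp.sum_mul_mul_conjTranspose (h : IsDecomp ρ p ψ) (K : Fin m → Matrix ι ι ℂ) :
    ∑ k, K k * ρ * (K k)ᴴ = ∑ ki : Fin m × Fin n,
      (p ki.2 : ℂ) • vecMulVec (K ki.1 *ᵥ ψ ki.2) (star (K ki.1 *ᵥ ψ ki.2)) := by
  simp only [h.2.2.2, Fintype.sum_prod_type, Matrix.mul_sum, Matrix.sum_mul, Matrix.mul_smul,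
    Matrix.smul_mul, mul_vecMulVec_star_mul_conjTranspose]

theorem IsDecomp.sum_mul_sum_norm_sq_mulVec_mul [DecidableEq ι] (h : IsDecomp ρ p ψ)
    {K : Fin m → Matrix ι ι ℂ} (htp : ∑ k, (K k)ᴴ * K k = 1) (f : Fin n → ℝ) :
    ∑ ki : Fin m × Fin n, p ki.2 * (∑ x, ‖(K ki.1 *ᵥ ψ ki.2) x‖ ^ 2) * f ki.2 =
      ∑ i, p i * f i := by
  rw [Fintype.sum_prod_type_right]
  refine Fintype.sum_congr _ _ fun i => ?_
  dsimp only
  rw [← Finset.sum_mul, ← Finset.mul_sum, sum_sum_norm_sq_mulVec htp, h.2.2.1 i, mul_one]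

end KrausOperators

/-- C2: monotonicity of the logarithmic coherence number under an
incoherent operation Λ(ρ) = ∑ₙ KₙρKₙ† with incoherent Kraus operators. -/
theorem logCohNum_monotone {d : ℕ} (ρ : Matrix (Fin d) (Fin d) ℂ)
    (hρ : IsDensity ρ) {m : ℕ} (K : Fin m → Matrix (Fin d) (Fin d) ℂ)
    (hinc : ∀ n, IsIncoherentKraus (K n))
    (htp : ∑ n, (K n)ᴴ * K n = 1) :
    logCohNum (∑ n, K n * ρ * (K n)ᴴ) ≤ logCohNum ρ := by
  obtain ⟨n₀, p₀, ψ₀, hdec₀⟩ := hρ.exists_isDecomp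
  refine le_csInf ⟨_, n₀, p₀, ψ₀, hdec₀, rfl⟩ ?_
  rintro _ ⟨n, p, ψ, hdec, rfl⟩
  have hsum : ∑ ki : Fin m × Fin n, p ki.2 * ∑ x, ‖(K ki.1 *ᵥ ψ ki.2) x‖ ^ 2 = 1 := by
    simpa only [mul_one, hdec.2.1] using hdec.sum_mul_sum_norm_sq_mulVec_mul htp fun _ => 1
  rw [hdec.sum_mul_mul_conjTranspose]
  calc _ ≤ ∑ ki : Fin m × Fin n, p ki.2 * (∑ x, ‖(K ki.1 *ᵥ ψ ki.2) x‖ ^ 2) *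
          logCohRank (K ki.1 *ᵥ ψ ki.2) :=
        logCohNum_sum_smul_vecMulVec_le (κ := Fin m × Fin n) (fun ki => (hdec.1 ki.2).le) _ hsum
    _ ≤ ∑ ki : Fin m × Fin n, p ki.2 * (∑ x, ‖(K ki.1 *ᵥ ψ ki.2) x‖ ^ 2) *
          logCohRank (ψ ki.2) :=
        Finset.sum_le_sum fun ki _ => mul_le_mul_of_nonneg_left
          ((hinc ki.1).logCohRank_mulVec_le _)
          (mul_nonneg (hdec.1 ki.2).le (Finset.sum_nonneg fun x _ => sq_nonneg _))
    _ = ∑ i, p i * logCohRank (ψ i) :=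
        hdec.sum_mul_sum_norm_sq_mulVec_mul htp fun i => logCohRank (ψ i)
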